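/- arXiv:1704.04779 — 3 statements merged into one kernel-verified Lean document; each statement's English description precedes it below -/
import Mathlib

section
/- Let z ≤ 0 be a real number and set w(z) = (3/2^(5/3))·(−i·y(z) + x(z) + 2/3) where x(z) = 4z/(z−1)² and y(z) = 4z(z+1)/(z−1)³. Then 2^(−5/3) ≤ |w(z)| ≤ 2^(−2/3). -/
/-- x-coordinate of the parametrization of the nodal cubic y² = x³ + x². -/
noncomputable def xnod (z : ℝ) : ℝ := 4 * z / (z - 1) ^ 2

/-- y-coordinate of the parametrization of the nodal cubic y² = x³ + x². -/
noncomputable def ynod (z : ℝ) : ℝ := 4 * z * (z + 1) / (z - 1) ^ 3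

/-- w(z) = (3/2^(5/3))·(−i·y(z) + x(z) + 2/3). -/
noncomputable def wnod (z : ℝ) : ℂ :=
  ((3 / 2 ^ ((5 : ℝ) / 3) : ℝ) : ℂ) * (-Complex.I * (ynod z : ℂ) + (xnod z : ℂ) + 2 / 3)

/-!
Up to the factor `3 · 2^(-5/3)`, `w(z)` is the point `(x + 2/3, -y)`, so it suffices to show
`1/9 ≤ (x + 2/3)² + y² ≤ 4/9`. Over the common denominator `9 (z - 1)⁶` both differences have
manifestly signed numerators: `3 (z + 1)²` times a sum of squares for the lower bound, and `-48 z`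
times a positive polynomial for the upper one, which is where `z ≤ 0` enters.
-/

open Complex

noncomputable def nodalShift (z : ℝ) : ℂ := -I * (ynod z : ℂ) + (xnod z : ℂ) + 2 / 3

lemma norm_nodalShift_sq (z : ℝ) :
    ‖nodalShift z‖ ^ 2 = (xnod z + 2 / 3) ^ 2 + ynod z ^ 2 := by
  have : nodalShift z = ((xnod z + 2 / 3 : ℝ) : ℂ) + ((-ynod z : ℝ) : ℂ) * I := by
    unfold nodalShift; push_cast; ring
  rw [this, norm_add_mul_I, Real.sq_sqrt (by positivity), neg_sq]

lemma nodal_sq_sum_sub_one_ninth (z : ℝ) (hz : z ≠ 1) :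
    (xnod z + 2 / 3) ^ 2 + ynod z ^ 2 - 1 / 9
      = 3 * (z + 1) ^ 2 * ((z ^ 2 + 4 * z + 1) ^ 2 + 12 * z ^ 2) / (9 * (z - 1) ^ 6) := by
  have : z - 1 ≠ 0 := sub_ne_zero.mpr hz
  unfold xnod ynod; field_simp; ring

lemma four_ninths_sub_nodal_sq_sum (z : ℝ) (hz : z ≠ 1) :
    4 / 9 - ((xnod z + 2 / 3) ^ 2 + ynod z ^ 2)
      = -48 * z * ((z ^ 2 + z) ^ 2 + 5 * (z + 1 / 5) ^ 2 + 4 / 5) / (9 * (z - 1) ^ 6) := by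
  have : z - 1 ≠ 0 := sub_ne_zero.mpr hz
  unfold xnod ynod; field_simp; ring

lemma one_third_le_norm_nodalShift (z : ℝ) (hz : z ≠ 1) : 1 / 3 ≤ ‖nodalShift z‖ := by
  have h := nodal_sq_sum_sub_one_ninth z hz
  have : 0 ≤ 3 * (z + 1) ^ 2 * ((z ^ 2 + 4 * z + 1) ^ 2 + 12 * z ^ 2) / (9 * (z - 1) ^ 6) := by
    positivity
  nlinarith [norm_nodalShift_sq z, norm_nonneg (nodalShift z)]

lemma norm_nodalShift_le_two_thirds (z : ℝ) (hz : z ≤ 0) : ‖nodalShift z‖ ≤ 2 / 3 := by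
  have h := four_ninths_sub_nodal_sq_sum z (by linarith)
  have : 0 ≤ -48 * z * ((z ^ 2 + z) ^ 2 + 5 * (z + 1 / 5) ^ 2 + 4 / 5) / (9 * (z - 1) ^ 6) := by
    apply div_nonneg _ (by positivity)
    exact mul_nonneg (by linarith) (by positivity)
  nlinarith [norm_nodalShift_sq z, norm_nonneg (nodalShift z)]

lemma norm_wnod (z : ℝ) : ‖wnod z‖ = 3 * (2 : ℝ) ^ (-(5 : ℝ) / 3) * ‖nodalShift z‖ := by
  rw [wnod, ← nodalShift, norm_mul, Complex.norm_real, Real.norm_of_nonneg (by positivity),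
    neg_div, Real.rpow_neg (by norm_num), div_eq_mul_inv]

theorem stmt_0 (z : ℝ) (hz : z ≤ 0) :
    (2 : ℝ) ^ (-(5 : ℝ) / 3) ≤ ‖wnod z‖ ∧
      ‖wnod z‖ ≤ (2 : ℝ) ^ (-(2 : ℝ) / 3) := by
  have hpos : 0 < (2 : ℝ) ^ (-(5 : ℝ) / 3) := by positivity
  have htwo : (2 : ℝ) ^ (-(2 : ℝ) / 3) = 2 * (2 : ℝ) ^ (-(5 : ℝ) / 3) := by
    rw [show -(2 : ℝ) / 3 = 1 + -(5 : ℝ) / 3 by norm_num, Real.rpow_add two_pos, Real.rpow_one]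
  have hlow := one_third_le_norm_nodalShift z (by linarith)
  have hup := norm_nodalShift_le_two_thirds z hz
  rw [norm_wnod, htwo]
  constructor <;> nlinarith
end

section
/- Let n ≥ 1 be a natural number and c₁, c₂, c₃, c₄ ∈ ℂ. In the polynomial ring ℂ[u,v], the coefficient of the monomial uⁿvⁿ in (c₁ + c₂·u + c₃·u²v³ + c₄·u³v⁵)ⁿ equals Σ_{m,r ≥ 0, 5m+3r = n} n!/(((2m+r)!)²·m!·r!) · c₁^(2m+r)·c₂^(2m+r)·c₃^r·c₄^m. -/
/-! Expanding the n-th power multinomially, the term indexed by `k = (k₀, k₁, k₂, k₃)` with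
`∑ kᵢ = n` contributes to `uⁿvⁿ` iff `k₁ + 2k₂ + 3k₃ = n` and `3k₂ + 5k₃ = n`. Together these
force `k = (2m + r, 2m + r, r, m)` with `5m + 3r = n`, and the multinomial coefficient becomes
`n! / ((2m + r)!² m! r!)`. -/

open MvPolynomial Finset

theorem MvPolynomial.coeff_sum_monomial_pow {σ ι R : Type*} [CommSemiring R] [DecidableEq σ]
    [Fintype ι] [DecidableEq ι] (e : ι → σ →₀ ℕ) (a : ι → R) (n : ℕ) (d : σ →₀ ℕ) :
    coeff d ((∑ i, monomial (e i) (a i)) ^ n) =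
      ∑ k ∈ (piAntidiag univ n).filter (fun k => ∑ i, k i • e i = d),
        (Nat.multinomial univ k : R) * ∏ i, a i ^ k i := by
  simp_rw [sum_pow_eq_sum_piAntidiag, coeff_sum, monomial_pow, ← monomial_sum_prod,
    ← C_eq_coe_nat, coeff_C_mul, coeff_monomial, sum_filter, mul_ite, mul_zero]

theorem Nat.cast_multinomial_eq_div {α K : Type*} [Field K] [CharZero K] (s : Finset α)
    (f : α → ℕ) :
    (Nat.multinomial s f : K) = (∑ i ∈ s, f i).factorial / ∏ i ∈ s, ((f i).factorial : K) := by
  rw [eq_div_iff (prod_ne_zero_iff.2 fun i _ => Nat.cast_ne_zero.2 (factorial_ne_zero _)),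
    mul_comm, ← Nat.cast_prod, ← Nat.cast_mul, multinomial_spec]

noncomputable def monomialExponents : Fin 4 → Fin 2 →₀ ℕ :=
  ![0, .single 0 1, .single 0 2 + .single 1 3, .single 0 3 + .single 1 5]

theorem sum_smul_monomialExponents_eq_iff (k : Fin 4 → ℕ) (n : ℕ) :
    ∑ i, k i • monomialExponents i = .single 0 n + .single 1 n ↔
      k 1 + 2 * k 2 + 3 * k 3 = n ∧ 3 * k 2 + 5 * k 3 = n := by
  simp only [monomialExponents, Fin.sum_univ_four, Matrix.cons_val_zero, Matrix.cons_val_one,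
    Matrix.cons_val, nsmul_zero, smul_add, Finsupp.smul_single, smul_eq_mul, mul_one, zero_add,
    Finsupp.ext_iff, Fin.forall_fin_two, Finsupp.coe_add, Pi.add_apply, Finsupp.single_eq_same,
    ne_eq, zero_ne_one, one_ne_zero, not_false_eq_true, Finsupp.single_eq_of_ne, add_zero]
  omega

theorem mem_filter_piAntidiag_monomialExponents_iff (k : Fin 4 → ℕ) (n : ℕ) :
    k ∈ (piAntidiag univ n).filter
        (fun k => ∑ i, k i • monomialExponents i = .single 0 n + .single 1 n) ↔
      5 * k 3 + 3 * k 2 = n ∧ k 0 = 2 * k 3 + k 2 ∧ k 1 = 2 * k 3 + k 2 := by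
  rw [mem_filter, mem_piAntidiag, sum_smul_monomialExponents_eq_iff, Fin.sum_univ_four]
  simp only [mem_univ, implies_true, ne_eq, and_true]
  omega

theorem sum_filter_piAntidiag_monomialExponents {M : Type*} [AddCommMonoid M] (n : ℕ)
    (f : (Fin 4 → ℕ) → M) :
    ∑ k ∈ (piAntidiag univ n).filter
        (fun k => ∑ i, k i • monomialExponents i = .single 0 n + .single 1 n), f k =
      ∑ p ∈ (range (n + 1) ×ˢ range (n + 1)).filter (fun p => 5 * p.1 + 3 * p.2 = n),
        f ![2 * p.1 + p.2, 2 * p.1 + p.2, p.2, p.1] := by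
  symm
  refine sum_nbij' (fun p => ![2 * p.1 + p.2, 2 * p.1 + p.2, p.2, p.1]) (fun k => (k 3, k 2))
    ?_ ?_ ?_ ?_ fun _ _ => rfl
  · intro p hp
    simp only [mem_filter, mem_product, mem_range] at hp
    rw [mem_filter_piAntidiag_monomialExponents_iff]
    simp [hp.2]
  · intro k hk
    rw [mem_filter_piAntidiag_monomialExponents_iff] at hk
    simp only [mem_filter, mem_product, mem_range]
    omega
  · intro p _
    simp
  · intro k hk
    rw [mem_filter_piAntidiag_monomialExponents_iff] at hk
    ext i
    fin_cases i <;> simp [hk.2.1, hk.2.2]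

theorem stmt_2_general (n : ℕ) (c₁ c₂ c₃ c₄ : ℂ) :
    MvPolynomial.coeff (Finsupp.single (0 : Fin 2) n + Finsupp.single (1 : Fin 2) n)
      ((C c₁ + C c₂ * X 0 + C c₃ * X 0 ^ 2 * X 1 ^ 3 + C c₄ * X 0 ^ 3 * X 1 ^ 5 :
          MvPolynomial (Fin 2) ℂ) ^ n) =
    ∑ m ∈ Finset.range (n + 1), ∑ r ∈ Finset.range (n + 1),
      if 5 * m + 3 * r = n then
        (n.factorial : ℂ) /
            ((((2 * m + r).factorial) ^ 2 * m.factorial * r.factorial : ℕ) : ℂ) *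
          c₁ ^ (2 * m + r) * c₂ ^ (2 * m + r) * c₃ ^ r * c₄ ^ m
      else 0 := by
  have hpoly : (C c₁ + C c₂ * X 0 + C c₃ * X 0 ^ 2 * X 1 ^ 3 + C c₄ * X 0 ^ 3 * X 1 ^ 5 :
      MvPolynomial (Fin 2) ℂ) = ∑ i, monomial (monomialExponents i) (![c₁, c₂, c₃, c₄] i) := by
    simp only [Fin.sum_univ_four, monomialExponents, Matrix.cons_val_zero, Matrix.cons_val_one,
      Matrix.cons_val, monomial_zero', monomial_single_add, ← C_mul_X_pow_eq_monomial, pow_one]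
    ring
  rw [hpoly, coeff_sum_monomial_pow, sum_filter_piAntidiag_monomialExponents, ← sum_product',
    ← sum_filter]
  refine sum_congr rfl fun ⟨m, r⟩ hmr => ?_
  have hsum : 2 * m + r + (2 * m + r) + r + m = n := by
    rw [mem_filter] at hmr
    omega
  rw [Nat.cast_multinomial_eq_div, Fin.sum_univ_four, Fin.prod_univ_four, Fin.prod_univ_four]
  simp only [Matrix.cons_val_zero, Matrix.cons_val_one, Matrix.cons_val, hsum, Nat.cast_mul,
    Nat.cast_pow]
  ring

theorem stmt_2 (n : ℕ) (hn : 1 ≤ n) (c₁ c₂ c₃ c₄ : ℂ) :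
    MvPolynomial.coeff (Finsupp.single (0 : Fin 2) n + Finsupp.single (1 : Fin 2) n)
      ((C c₁ + C c₂ * X 0 + C c₃ * X 0 ^ 2 * X 1 ^ 3 + C c₄ * X 0 ^ 3 * X 1 ^ 5 :
          MvPolynomial (Fin 2) ℂ) ^ n) =
    ∑ m ∈ Finset.range (n + 1), ∑ r ∈ Finset.range (n + 1),
      if 5 * m + 3 * r = n then
        (n.factorial : ℂ) /
            ((((2 * m + r).factorial) ^ 2 * m.factorial * r.factorial : ℕ) : ℂ) *
          c₁ ^ (2 * m + r) * c₂ ^ (2 * m + r) * c₃ ^ r * c₄ ^ m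
      else 0 :=
  stmt_2_general n c₁ c₂ c₃ c₄
end

section
/- Let ε ∈ (0,1) and x₀, x₃ ∈ ℂ satisfy |x₀|·ε² + ε⁻¹ + ε⁷ + ε⁻² < |x₃|. Then (1/(2πi)²)·∮_{|u|=ε} u⁻¹·( ∮_{|v|=ε} v⁻¹·Log(1 + (x₀·u·v + v⁻¹ + u³v⁴ + u⁻¹v⁻¹)/x₃) dv ) du = −Σ_{(m,r)∈ℕ², (m,r)≠(0,0)} (5m+2r)!/((3m+r)!·r!·(m!)²·(5m+2r)) · (−x₃⁻⁵)^m · (x₀/x₃²)^r, where the double series on the right converges absolutely. -/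
/-!
On the torus `|u| = |v| = ε` the Laurent polynomial `f = (x₀uv + v⁻¹ + u³v⁴ + u⁻¹v⁻¹)/x₃` has
norm at most `ρ = (‖x₀‖ε² + ε⁻¹ + ε⁷ + ε⁻²)/‖x₃‖ < 1`, so `log (1 + f) = ∑ (-1)^(k+1) f^k / k`
converges geometrically and may be integrated termwise. The normalised torus integral of
`u⁻¹ v⁻¹ f^k` is the constant term of `f^k`. In the multinomial expansion of `f^k` the monomials
`x₀uv, v⁻¹, u³v⁴, u⁻¹v⁻¹` taken with multiplicities `(r, m, m, 3m + r)`, `k = 5m + 2r`, are exactly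
the constant ones, and they sum to `-term5 (m, r)`. Bounding each monomial by its norm on the
torus gives `‖term5 (m, r)‖ ≤ ρ^(5m + 2r)`, hence absolute convergence, which allows the series
over `k` to be regrouped as the double series.
-/

/-- The (m,r)-term of the double series in §6, eq. (2C), with indices p = (m, r). -/
noncomputable def term5 (x₀ x₃ : ℂ) (p : ℕ × ℕ) : ℂ :=
  if p = (0, 0) then 0
  else
    ((5 * p.1 + 2 * p.2).factorial : ℂ) /
        (((3 * p.1 + p.2).factorial * p.2.factorial * (p.1.factorial) ^ 2 *
            (5 * p.1 + 2 * p.2) : ℕ) : ℂ) *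
      (-(x₃ ^ 5)⁻¹) ^ p.1 * (x₀ / x₃ ^ 2) ^ p.2

open Complex Metric Finset
open scoped Real

section Monomials

variable {ι : Type*}

lemma prod_zpow_eq_zpow_sum₀ {G₀ : Type*} [CommGroupWithZero G₀] {u : G₀} (hu : u ≠ 0)
    (s : Finset ι) (e : ι → ℤ) : ∏ i ∈ s, u ^ e i = u ^ ∑ i ∈ s, e i := by
  induction s using Finset.cons_induction with
  | empty => simp
  | cons j s hj ih => rw [prod_cons, sum_cons, ih, zpow_add₀ hu]

lemma prod_monomial_pow {K : Type*} [Field K] {u v : K} (hu : u ≠ 0) (hv : v ≠ 0)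
    (s : Finset ι) (a : ι → K) (p q : ι → ℤ) (κ : ι → ℕ) :
    ∏ i ∈ s, (a i * u ^ p i * v ^ q i) ^ κ i =
      (∏ i ∈ s, a i ^ κ i) * u ^ (∑ i ∈ s, (κ i : ℤ) * p i) *
        v ^ (∑ i ∈ s, (κ i : ℤ) * q i) := by
  simp only [mul_pow, prod_mul_distrib, ← zpow_natCast (_ ^ p _), ← zpow_natCast (_ ^ q _),
    ← zpow_mul, prod_zpow_eq_zpow_sum₀ hu, prod_zpow_eq_zpow_sum₀ hv, mul_comm (p _),
    mul_comm (q _)]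

lemma multinomial_mul_prod_pow_le_sum_pow [DecidableEq ι] {s : Finset ι} {y : ι → ℝ}
    (hy : ∀ i ∈ s, 0 ≤ y i) {n : ℕ} {κ : ι → ℕ} (hκ : κ ∈ s.piAntidiag n) :
    Nat.multinomial s κ * ∏ i ∈ s, y i ^ κ i ≤ (∑ i ∈ s, y i) ^ n := by
  rw [sum_pow_eq_sum_piAntidiag]
  exact single_le_sum (f := fun κ => (Nat.multinomial s κ : ℝ) * ∏ i ∈ s, y i ^ κ i)
    (fun κ _ => mul_nonneg (Nat.cast_nonneg _) (prod_nonneg fun i hi => pow_nonneg (hy i hi) _))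
    hκ

end Monomials

lemma circleIntegral_inv_mul_zpow {R : ℝ} (hR : 0 < R) (n : ℤ) :
    (∮ z in C(0, R), z⁻¹ * z ^ n) = if n = 0 then 2 * π * I else 0 := by
  have hEq : Set.EqOn (fun z : ℂ => z⁻¹ * z ^ n) (fun z => (z - 0) ^ (n - 1)) (sphere 0 R) :=
    fun z hz => by
      have hz0 : z ≠ 0 := ne_of_mem_sphere hz hR.ne'
      simp [zpow_sub_one₀ hz0, mul_comm]
  rw [circleIntegral.integral_congr hR.le hEq]
  split_ifs with hn
  · simpa [hn, zpow_neg_one] using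
      circleIntegral.integral_sub_inv_of_mem_ball (c := 0) (w := 0) (mem_ball_self hR)
  · exact circleIntegral.integral_sub_zpow_of_ne (by omega) _ _ _

lemma circleIntegral_inv_mul_sum_zpow {ι : Type*} {R : ℝ} (hR : 0 < R) (s : Finset ι)
    (c : ι → ℂ) (n : ι → ℤ) :
    (∮ z in C(0, R), z⁻¹ * ∑ i ∈ s, c i * z ^ n i) = 2 * π * I * ∑ i ∈ s with n i = 0, c i := by
  have hint : ∀ i ∈ s, CircleIntegrable (fun z => z⁻¹ * (c i * z ^ n i)) 0 R := fun i _ => by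
    refine ContinuousOn.circleIntegrable hR.le fun z hz => ContinuousAt.continuousWithinAt ?_
    have hz0 : z ≠ 0 := ne_of_mem_sphere hz hR.ne'
    fun_prop (disch := simp [hz0])
  simp_rw [mul_sum, circleIntegral.integral_fun_sum hint, mul_left_comm _ (c _),
    circleIntegral.integral_const_mul, circleIntegral_inv_mul_zpow hR, sum_filter]
  exact sum_congr rfl fun i _ => by split_ifs <;> ring

lemma hasSum_circleIntegral_of_norm_le {E : Type*} [NormedAddCommGroup E] [NormedSpace ℂ E]
    [CompleteSpace E] {F : ℕ → ℂ → E} {G : ℂ → E} {c : ℂ} {R : ℝ} (hR : 0 ≤ R) {b : ℕ → ℝ}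
    (hF : ∀ k, CircleIntegrable (F k) c R) (hb : Summable b)
    (hFb : ∀ k, ∀ z ∈ sphere c R, ‖F k z‖ ≤ b k)
    (hFG : ∀ z ∈ sphere c R, HasSum (fun k => F k z) (G z)) :
    HasSum (fun k => ∮ z in C(c, R), F k z) (∮ z in C(c, R), G z) := by
  refine intervalIntegral.hasSum_integral_of_dominated_convergence (fun k _ => R * b k)
    (fun k => ?_) (fun k => .of_forall fun θ _ => ?_) (.of_forall fun θ _ => hb.mul_left R)
    intervalIntegrable_const
    (.of_forall fun θ _ => (hFG _ (circleMap_mem_sphere c hR θ)).const_smul _)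
  · rw [Set.uIoc_of_le Real.two_pi_pos.le]
    exact (hF k).out.aestronglyMeasurable
  rw [norm_smul, deriv_circleMap, norm_mul, norm_circleMap_zero, norm_I, mul_one, abs_of_nonneg hR]
  exact mul_le_mul_of_nonneg_left (hFb k _ (circleMap_mem_sphere c hR θ)) hR

section BivariateLaurent

variable {ι : Type*} (s : Finset ι) (a : ι → ℂ) (p q : ι → ℤ)

noncomputable def bivariateLaurent (u v : ℂ) : ℂ := ∑ i ∈ s, a i * u ^ p i * v ^ q i

noncomputable def laurentPowCoeff (κ : ι → ℕ) : ℂ := Nat.multinomial s κ * ∏ i ∈ s, a i ^ κ i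

def constTermIndices [DecidableEq ι] (k : ℕ) : Finset (ι → ℕ) :=
  {κ ∈ s.piAntidiag k | ∑ i ∈ s, (κ i : ℤ) * p i = 0 ∧ ∑ i ∈ s, (κ i : ℤ) * q i = 0}

variable {s a p q}

lemma bivariateLaurent_pow [DecidableEq ι] {u v : ℂ} (hu : u ≠ 0) (hv : v ≠ 0) (k : ℕ) :
    bivariateLaurent s a p q u v ^ k = ∑ κ ∈ s.piAntidiag k,
      laurentPowCoeff s a κ * u ^ (∑ i ∈ s, (κ i : ℤ) * p i) * v ^ (∑ i ∈ s, (κ i : ℤ) * q i) := by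
  simp_rw [bivariateLaurent, sum_pow_eq_sum_piAntidiag, prod_monomial_pow hu hv, laurentPowCoeff,
    mul_assoc]

lemma norm_bivariateLaurent_le {u v : ℂ} {R S : ℝ} (hu : ‖u‖ = R) (hv : ‖v‖ = S) :
    ‖bivariateLaurent s a p q u v‖ ≤ ∑ i ∈ s, ‖a i‖ * R ^ p i * S ^ q i :=
  (norm_sum_le _ _).trans_eq (sum_congr rfl fun i _ => by simp [norm_zpow, hu, hv])

lemma continuousAt_bivariateLaurent {u v : ℂ} (hv : v ≠ 0) :
    ContinuousAt (fun v => bivariateLaurent s a p q u v) v := by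
  unfold bivariateLaurent
  fun_prop (disch := simp [hv])

lemma norm_laurentPowCoeff_le [DecidableEq ι] {R S : ℝ} (hR : 0 < R) (hS : 0 < S) {k : ℕ}
    {κ : ι → ℕ} (hκ : κ ∈ constTermIndices s p q k) :
    ‖laurentPowCoeff s a κ‖ ≤ (∑ i ∈ s, ‖a i‖ * R ^ p i * S ^ q i) ^ k := by
  obtain ⟨hκ, hp, hq⟩ := mem_filter.1 hκ
  have hmon := prod_monomial_pow hR.ne' hS.ne' s (fun i => ‖a i‖) p q κ
  rw [hp, hq, zpow_zero, zpow_zero, mul_one, mul_one] at hmon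
  calc ‖laurentPowCoeff s a κ‖ = Nat.multinomial s κ * ∏ i ∈ s, ‖a i‖ ^ κ i := by
        simp [laurentPowCoeff, norm_prod]
    _ = Nat.multinomial s κ * ∏ i ∈ s, (‖a i‖ * R ^ p i * S ^ q i) ^ κ i := by rw [hmon]
    _ ≤ _ := multinomial_mul_prod_pow_le_sum_pow (fun i _ => by positivity) hκ

end BivariateLaurent

lemma norm_logTaylorTerm_le (w : ℂ) (k : ℕ) : ‖(-1) ^ (k + 1) * w ^ k / k‖ ≤ ‖w‖ ^ k := by
  rw [norm_div, norm_mul, norm_pow, norm_pow, norm_neg, norm_one, one_pow, one_mul, norm_natCast]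
  rcases k.eq_zero_or_pos with rfl | hk
  · simp
  · exact div_le_self (by positivity) (by exact_mod_cast hk)

section LogOneAdd

variable {ι : Type*} {s : Finset ι} {a : ι → ℂ} {p q : ι → ℤ} {R S : ℝ}

lemma circleIntegral_inv_mul_bivariateLaurent_pow [DecidableEq ι] (hS : 0 < S) {u : ℂ}
    (hu : u ≠ 0) (k : ℕ) :
    (∮ v in C(0, S), v⁻¹ * bivariateLaurent s a p q u v ^ k) =
      2 * π * I * ∑ κ ∈ s.piAntidiag k with ∑ i ∈ s, (κ i : ℤ) * q i = 0,
        laurentPowCoeff s a κ * u ^ (∑ i ∈ s, (κ i : ℤ) * p i) := by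
  have hexp : Set.EqOn (fun v => v⁻¹ * bivariateLaurent s a p q u v ^ k)
      (fun v => v⁻¹ * ∑ κ ∈ s.piAntidiag k, laurentPowCoeff s a κ *
        u ^ (∑ i ∈ s, (κ i : ℤ) * p i) * v ^ (∑ i ∈ s, (κ i : ℤ) * q i)) (sphere 0 S) :=
    fun v hv => by dsimp only; rw [bivariateLaurent_pow hu (ne_of_mem_sphere hv hS.ne')]
  rw [circleIntegral.integral_congr hS.le hexp, circleIntegral_inv_mul_sum_zpow hS]

lemma norm_circleIntegral_inv_mul_bivariateLaurent_pow_le (hS : 0 < S) {u : ℂ} (hu : ‖u‖ = R)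
    (k : ℕ) : ‖∮ v in C(0, S), v⁻¹ * bivariateLaurent s a p q u v ^ k‖ ≤
      2 * π * (∑ i ∈ s, ‖a i‖ * R ^ p i * S ^ q i) ^ k := by
  refine (circleIntegral.norm_integral_le_of_norm_le_const hS.le
    (C := S⁻¹ * (∑ i ∈ s, ‖a i‖ * R ^ p i * S ^ q i) ^ k) fun v hv => ?_).trans_eq (by field_simp)
  rw [norm_mul, norm_inv, norm_pow, mem_sphere_zero_iff_norm.1 hv]
  gcongr
  exact norm_bivariateLaurent_le hu (mem_sphere_zero_iff_norm.1 hv)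

lemma hasSum_circleIntegral_inv_mul_log_one_add_bivariateLaurent (hS : 0 < S) {u : ℂ}
    (hu : ‖u‖ = R) (hρ : ∑ i ∈ s, ‖a i‖ * R ^ p i * S ^ q i < 1) :
    HasSum (fun k : ℕ =>
        (-1) ^ (k + 1) / k * ∮ v in C(0, S), v⁻¹ * bivariateLaurent s a p q u v ^ k)
      (∮ v in C(0, S), v⁻¹ * log (1 + bivariateLaurent s a p q u v)) := by
  set ρ := ∑ i ∈ s, ‖a i‖ * R ^ p i * S ^ q i
  have hL : ∀ v ∈ sphere (0 : ℂ) S, ‖bivariateLaurent s a p q u v‖ ≤ ρ := fun v hv =>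
    norm_bivariateLaurent_le hu (mem_sphere_zero_iff_norm.1 hv)
  have hρ0 : 0 ≤ ρ := (norm_nonneg _).trans (hL _ (circleMap_mem_sphere 0 hS.le 0))
  have hF := hasSum_circleIntegral_of_norm_le hS.le
    (F := fun k v => v⁻¹ * ((-1) ^ (k + 1) * bivariateLaurent s a p q u v ^ k / k))
    (b := fun k => S⁻¹ * ρ ^ k) (fun k => ?_) ((summable_geometric_of_lt_one hρ0 hρ).mul_left _)
    (fun k v hv => ?_) (fun v hv => (hasSum_taylorSeries_log ((hL v hv).trans_lt hρ)).mul_left _)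
  · refine hF.congr_fun fun k => ?_
    rw [← circleIntegral.integral_const_mul]
    congr 1 with v
    ring
  · refine ContinuousOn.circleIntegrable hS.le fun v hv => ContinuousAt.continuousWithinAt ?_
    have hv0 : v ≠ 0 := ne_of_mem_sphere hv hS.ne'
    have := continuousAt_bivariateLaurent (s := s) (a := a) (p := p) (q := q) (u := u) hv0
    fun_prop (disch := exact hv0)
  · rw [norm_mul, norm_inv, mem_sphere_zero_iff_norm.1 hv]
    gcongr
    exact (norm_logTaylorTerm_le _ k).trans (pow_le_pow_left₀ (norm_nonneg _) (hL v hv) k)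

theorem hasSum_circleIntegral_circleIntegral_log_one_add_bivariateLaurent [DecidableEq ι]
    (hR : 0 < R) (hS : 0 < S) (hρ : ∑ i ∈ s, ‖a i‖ * R ^ p i * S ^ q i < 1) :
    HasSum (fun k : ℕ => (-1) ^ (k + 1) / k * (2 * π * I) ^ 2 *
        ∑ κ ∈ constTermIndices s p q k, laurentPowCoeff s a κ)
      (∮ u in C(0, R), u⁻¹ * ∮ v in C(0, S), v⁻¹ * log (1 + bivariateLaurent s a p q u v)) := by
  set ρ := ∑ i ∈ s, ‖a i‖ * R ^ p i * S ^ q i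
  have hρ0 : 0 ≤ ρ := sum_nonneg fun i _ => by positivity
  set P : ℕ → ℂ → ℂ := fun k u => ∑ κ ∈ s.piAntidiag k with ∑ i ∈ s, (κ i : ℤ) * q i = 0,
    laurentPowCoeff s a κ * u ^ (∑ i ∈ s, (κ i : ℤ) * p i)
  have hP : ∀ k, ∀ u ∈ sphere (0 : ℂ) R,
      (∮ v in C(0, S), v⁻¹ * bivariateLaurent s a p q u v ^ k) = 2 * π * I * P k u :=
    fun k u hu => circleIntegral_inv_mul_bivariateLaurent_pow hS (ne_of_mem_sphere hu hR.ne') k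
  have hPbound : ∀ k, ∀ u ∈ sphere (0 : ℂ) R, ‖2 * π * I * P k u‖ ≤ 2 * π * ρ ^ k :=
    fun k u hu => hP k u hu ▸
      norm_circleIntegral_inv_mul_bivariateLaurent_pow_le hS (mem_sphere_zero_iff_norm.1 hu) k
  refine hasSum_circleIntegral_of_norm_le hR.le
    (F := fun k u => u⁻¹ * ((-1) ^ (k + 1) / k * (2 * π * I * P k u)))
    (b := fun k => R⁻¹ * ((2 * π) * ρ ^ k)) (fun k => ?_)
    (((summable_geometric_of_lt_one hρ0 hρ).mul_left _).mul_left _)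
    (fun k u hu => ?_) (fun u hu => ?_) |>.congr_fun fun k => ?_
  · refine ContinuousOn.circleIntegrable hR.le fun u hu => ContinuousAt.continuousWithinAt ?_
    have hu0 : u ≠ 0 := ne_of_mem_sphere hu hR.ne'
    fun_prop (disch := simp [hu0])
  · rw [norm_mul, norm_inv, mem_sphere_zero_iff_norm.1 hu]
    refine mul_le_mul_of_nonneg_left ?_ (by positivity)
    calc ‖(-1) ^ (k + 1) / (k : ℂ) * (2 * π * I * P k u)‖ ≤ 1 * ‖2 * π * I * P k u‖ := by
          rw [norm_mul]
          gcongr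
          simpa using norm_logTaylorTerm_le 1 k
      _ ≤ 2 * π * ρ ^ k := (one_mul _).trans_le (hPbound k u hu)
  · refine (hasSum_circleIntegral_inv_mul_log_one_add_bivariateLaurent hS
      (mem_sphere_zero_iff_norm.1 hu) hρ).mul_left u⁻¹ |>.congr_fun fun k => ?_
    rw [hP k u hu]
  · have hmul : ∀ u : ℂ, u⁻¹ * ((-1) ^ (k + 1) / k * (2 * π * I * P k u)) =
        (-1) ^ (k + 1) / k * (2 * π * I) * (u⁻¹ * P k u) := fun u => by ring
    simp_rw [hmul, circleIntegral.integral_const_mul, P, circleIntegral_inv_mul_sum_zpow hR,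
      filter_filter, constTermIndices]
    simp only [and_comm]
    ring

end LogOneAdd

lemma HasSum.sum_fiberwise_of_coe_eq {α β γ : Type*} [AddCommGroup α] [UniformSpace α]
    [IsUniformAddGroup α] [CompleteSpace α] [T2Space α] {f : β → α} {a : α} (hf : HasSum f a)
    (g : β → γ) (t : γ → Finset β) (ht : ∀ c, (t c : Set β) = g ⁻¹' {c}) :
    HasSum (fun c => ∑ b ∈ t c, f b) a := by
  refine (hf.tsum_fiberwise g).congr_fun fun c => ?_
  rw [← Finset.tsum_subtype', ht]

namespace MirrorCurve

noncomputable def coeff (x₀ x₃ : ℂ) : Fin 4 → ℂ := ![x₀ / x₃, x₃⁻¹, x₃⁻¹, x₃⁻¹]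

def uExp : Fin 4 → ℤ := ![1, 0, 3, -1]

def vExp : Fin 4 → ℤ := ![1, -1, 4, -1]

def index (m r : ℕ) : Fin 4 → ℕ := ![r, m, m, 3 * m + r]

def fiber (k : ℕ) : Finset (ℕ × ℕ) :=
  {mr ∈ range (k + 1) ×ˢ range (k + 1) | 5 * mr.1 + 2 * mr.2 = k}

lemma bivariateLaurent_coeff (x₀ x₃ u v : ℂ) :
    bivariateLaurent univ (coeff x₀ x₃) uExp vExp u v =
      (x₀ * u * v + v⁻¹ + u ^ 3 * v ^ 4 + u⁻¹ * v⁻¹) / x₃ := by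
  simp only [bivariateLaurent, coeff, uExp, vExp, Fin.sum_univ_four, Matrix.cons_val_zero,
    Matrix.cons_val_one, Matrix.cons_val, zpow_ofNat, zpow_neg, pow_zero, pow_one, mul_one]
  ring

lemma coe_fiber (k : ℕ) : (fiber k : Set (ℕ × ℕ)) = (fun mr => 5 * mr.1 + 2 * mr.2) ⁻¹' {k} := by
  ext ⟨m, r⟩
  simp only [fiber, coe_filter, mem_product, mem_range, Set.mem_ofPred_eq, Set.mem_preimage,
    Set.mem_singleton_iff]
  omega

lemma mem_constTermIndices_iff {k : ℕ} {κ : Fin 4 → ℕ} :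
    κ ∈ constTermIndices univ uExp vExp k ↔ 5 * κ 1 + 2 * κ 0 = k ∧ index (κ 1) (κ 0) = κ := by
  simp only [constTermIndices, mem_filter, mem_piAntidiag, Fin.sum_univ_four, uExp, vExp,
    mem_univ, implies_true, and_true]
  constructor
  · rintro ⟨hk, hp, hq⟩
    simp only [Matrix.cons_val_zero, Matrix.cons_val_one, Matrix.cons_val, mul_one, mul_zero,
      add_zero, mul_neg] at hp hq
    refine ⟨by omega, funext fun i => ?_⟩
    fin_cases i <;>
      simp only [index, Fin.zero_eta, Fin.mk_one, Fin.reduceFinMk, Matrix.cons_val_zero,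
        Matrix.cons_val_one, Matrix.cons_val] <;> omega
  · rintro ⟨hk, hκ⟩
    rw [← hκ]
    simp only [index, Matrix.cons_val_zero, Matrix.cons_val_one, Matrix.cons_val, mul_one,
      mul_zero, add_zero, mul_neg, Nat.cast_add, Nat.cast_mul, Nat.cast_ofNat]
    omega

lemma sum_constTermIndices (x₀ x₃ : ℂ) (k : ℕ) :
    ∑ κ ∈ constTermIndices univ uExp vExp k, laurentPowCoeff univ (coeff x₀ x₃) κ =
      ∑ mr ∈ fiber k, laurentPowCoeff univ (coeff x₀ x₃) (index mr.1 mr.2) := by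
  refine sum_nbij' (fun κ => (κ 1, κ 0)) (fun mr => index mr.1 mr.2) (fun κ hκ => ?_)
    (fun mr hmr => ?_) (fun κ hκ => (mem_constTermIndices_iff.1 hκ).2) (fun _ _ => rfl)
    (fun κ hκ => by rw [(mem_constTermIndices_iff.1 hκ).2])
  · have := (mem_constTermIndices_iff.1 hκ).1
    simp only [fiber, mem_filter, mem_product, mem_range]
    omega
  · simp only [fiber, mem_filter] at hmr
    exact mem_constTermIndices_iff.2 ⟨hmr.2, rfl⟩

lemma neg_one_pow_five_mul_add_two_mul_add_one (m r : ℕ) :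
    (-1 : ℂ) ^ (5 * m + 2 * r + 1) = -(-1) ^ m := by
  rw [show 5 * m + 2 * r + 1 = 2 * (2 * m + r) + m + 1 by ring, pow_succ, pow_add, pow_mul]
  simp

/-- At `(m, r) = (0, 0)` both sides vanish, the right one because `(0 : ℂ)⁻¹ = 0`. -/
lemma term5_eq (x₀ x₃ : ℂ) (m r : ℕ) :
    term5 x₀ x₃ (m, r) = -((-1) ^ (5 * m + 2 * r + 1) / ((5 * m + 2 * r : ℕ) : ℂ) *
      laurentPowCoeff univ (coeff x₀ x₃) (index m r)) := by
  rcases eq_or_ne (m, r) (0, 0) with hmr | hmr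
  · simp_all [term5]
  have hspec := Nat.multinomial_spec univ (index m r)
  simp only [index, Fin.prod_univ_four, Fin.sum_univ_four, Matrix.cons_val_zero,
    Matrix.cons_val_one, Matrix.cons_val] at hspec
  have hmult : (Nat.multinomial univ (index m r) : ℂ) =
      (5 * m + 2 * r).factorial /
        (r.factorial * m.factorial * m.factorial * (3 * m + r).factorial) := by
    rw [eq_div_iff (by norm_cast; positivity), mul_comm]
    exact_mod_cast (hspec.trans (by ring_nf))
  rw [term5, if_neg hmr, laurentPowCoeff, hmult, neg_one_pow_five_mul_add_two_mul_add_one,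
    Nat.cast_mul]
  generalize ((5 * m + 2 * r : ℕ) : ℂ) = n
  simp only [Nat.cast_mul, Nat.cast_pow, coeff, index, Fin.prod_univ_four, Matrix.cons_val_zero,
    Matrix.cons_val_one, Matrix.cons_val, inv_pow]
  ring

lemma logCoeff_mul_sum_constTermIndices (x₀ x₃ : ℂ) (k : ℕ) :
    (-1) ^ (k + 1) / k * (2 * π * I) ^ 2 *
        ∑ κ ∈ constTermIndices univ uExp vExp k, laurentPowCoeff univ (coeff x₀ x₃) κ =
      -(2 * π * I) ^ 2 * ∑ mr ∈ fiber k, term5 x₀ x₃ mr := by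
  rw [sum_constTermIndices, mul_sum, mul_sum]
  refine sum_congr rfl fun ⟨m, r⟩ hmr => ?_
  obtain rfl : 5 * m + 2 * r = k := (mem_filter.1 hmr).2
  rw [term5_eq]
  ring

lemma sum_norm_coeff_mul_zpow (x₀ x₃ : ℂ) {ε : ℝ} (hε : 0 < ε) :
    ∑ i, ‖coeff x₀ x₃ i‖ * ε ^ uExp i * ε ^ vExp i =
      (‖x₀‖ * ε ^ 2 + ε⁻¹ + ε ^ 7 + (ε ^ 2)⁻¹) / ‖x₃‖ := by
  simp only [coeff, uExp, vExp, Fin.sum_univ_four, Matrix.cons_val_zero, Matrix.cons_val_one,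
    Matrix.cons_val, Complex.norm_div, norm_inv, zpow_ofNat, zpow_neg, pow_zero, pow_one, mul_one]
  field_simp

lemma norm_term5_le (x₀ x₃ : ℂ) {ε : ℝ} (hε : 0 < ε) (m r : ℕ) :
    ‖term5 x₀ x₃ (m, r)‖ ≤ (∑ i, ‖coeff x₀ x₃ i‖ * ε ^ uExp i * ε ^ vExp i) ^ (5 * m + 2 * r) := by
  rw [term5_eq, norm_neg, norm_mul]
  refine (mul_le_mul (by simpa using norm_logTaylorTerm_le 1 (5 * m + 2 * r))
    (norm_laurentPowCoeff_le hε hε (mem_constTermIndices_iff.2 ⟨rfl, rfl⟩)) (norm_nonneg _)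
    zero_le_one).trans_eq (one_mul _)

lemma summable_norm_term5 (x₀ x₃ : ℂ) {ε : ℝ} (hε : 0 < ε)
    (hρ : ∑ i, ‖coeff x₀ x₃ i‖ * ε ^ uExp i * ε ^ vExp i < 1) :
    Summable fun p : ℕ × ℕ => ‖term5 x₀ x₃ p‖ := by
  set ρ := ∑ i, ‖coeff x₀ x₃ i‖ * ε ^ uExp i * ε ^ vExp i
  have hρ0 : 0 ≤ ρ := sum_nonneg fun i _ => by positivity
  have hgeom (n : ℕ) (hn : n ≠ 0) : Summable fun m : ℕ => (ρ ^ n) ^ m :=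
    summable_geometric_of_lt_one (by positivity) (pow_lt_one₀ hρ0 hρ hn)
  refine .of_nonneg_of_le (fun _ => norm_nonneg _) (fun ⟨m, r⟩ => ?_)
    ((hgeom 5 (by norm_num)).mul_of_nonneg (hgeom 2 (by norm_num)) (fun _ => by positivity)
      (fun _ => by positivity))
  exact (norm_term5_le x₀ x₃ hε m r).trans_eq (by rw [pow_add, pow_mul, pow_mul])

end MirrorCurve

open MirrorCurve in
theorem stmt_5 (ε : ℝ) (hε : ε ∈ Set.Ioo (0 : ℝ) 1) (x₀ x₃ : ℂ)
    (h : ‖x₀‖ * ε ^ 2 + ε⁻¹ + ε ^ 7 + (ε ^ 2)⁻¹ < ‖x₃‖) :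
    Summable (fun p : ℕ × ℕ => ‖term5 x₀ x₃ p‖) ∧
    (1 / (2 * (Real.pi : ℂ) * Complex.I) ^ 2) *
        (∮ u in C(0, ε), u⁻¹ *
          ∮ v in C(0, ε),
            v⁻¹ * Complex.log (1 + (x₀ * u * v + v⁻¹ + u ^ 3 * v ^ 4 + u⁻¹ * v⁻¹) / x₃)) =
      -∑' p : ℕ × ℕ, term5 x₀ x₃ p := by
  obtain ⟨hε0, -⟩ := hε
  have hρ : ∑ i, ‖coeff x₀ x₃ i‖ * ε ^ uExp i * ε ^ vExp i < 1 :=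
    (sum_norm_coeff_mul_zpow x₀ x₃ hε0).trans_lt
      ((div_lt_one ((by positivity : (0 : ℝ) ≤ _).trans_lt h)).2 h)
  have hsum := summable_norm_term5 x₀ x₃ hε0 hρ
  refine ⟨hsum, ?_⟩
  have hI := hasSum_circleIntegral_circleIntegral_log_one_add_bivariateLaurent hε0 hε0 hρ
  simp only [bivariateLaurent_coeff, logCoeff_mul_sum_constTermIndices] at hI
  have hT := (hsum.of_norm.hasSum.sum_fiberwise_of_coe_eq _ fiber coe_fiber).mul_left
    (-(2 * π * I) ^ 2)
  rw [hI.unique hT]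
  field_simp
end
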